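/- (Quadratic reciprocity in ℤ[√2].) Let π₂, ρ₂ ∈ ℤ[√2] be totally positive elements with π₂ ≡ ρ₂ ≡ 1 (mod 2ℤ[√2]) whose norms p = N(π₂) and q = N(ρ₂) are distinct odd primes. Then π₂ is a square modulo the ideal ρ₂ℤ[√2] if and only if ρ₂ is a square modulo the ideal π₂ℤ[√2]. -/

import Mathlib

open NumberField

/-- An element of `ℤ√2` is totally positive if it is positive under both real embeddings
`a + b√2 ↦ a ± b√2`. -/
def Zsqrtd.IsTotallyPositive (x : ℤ√2) : Prop :=
  0 < (x.re : ℝ) + (x.im : ℝ) * Real.sqrt 2 ∧ 0 < (x.re : ℝ) - (x.im : ℝ) * Real.sqrt 2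

/-!
Write `π = a + b√2`, `ρ = c + d√2`. Reducing modulo `ρ` sends `√2` to `-c/d` in `𝔽_q`, so `π` is
a square modulo `ρ` iff the Legendre symbol `((ad - bc)d / q)` is not `-1`; symmetrically for `ρ`
modulo `π`. With `σ = π ρ̄ = s + t√2`, of norm `pq` and with `s > 0` by total positivity, the two
symbols become `(c/q)(s/q)` and `(a/p)(s/p)`. Jacobi reciprocity and the supplementary law for `-2`
evaluate `(a/p)`, `(c/q)` and `(s/pq)` as `χ₈'(a)`, `χ₈'(c)`, `χ₈'(s)`, because
`p = a² - 2b² ≡ -2b² (mod a)` and so on; finally `s ≡ ac (mod 8)` since `b` and `d` are even.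
-/

theorem isSquare_mul_sq_iff {K : Type*} [Field K] {x y : K} (hy : y ≠ 0) :
    IsSquare (x * y ^ 2) ↔ IsSquare x := by
  constructor
  · rintro ⟨r, hr⟩
    refine ⟨r / y, ?_⟩
    field_simp
    linear_combination hr
  · rintro ⟨r, rfl⟩
    exact ⟨r * y, by ring⟩

theorem legendreSym_eq_of_mul_sq_modEq {p : ℕ} [Fact p.Prime] {x y t u : ℤ}
    (h : x * t ^ 2 ≡ y * u ^ 2 [ZMOD p]) (ht : ¬ (p : ℤ) ∣ t) (hu : ¬ (p : ℤ) ∣ u) :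
    legendreSym p x = legendreSym p y := by
  have hsq : legendreSym p (x * t ^ 2) = legendreSym p (y * u ^ 2) := by
    rw [legendreSym.mod, h, ← legendreSym.mod]
  rwa [legendreSym.mul, legendreSym.mul,
    legendreSym.sq_one' p (mt (ZMod.intCast_zmod_eq_zero_iff_dvd _ _).mp ht),
    legendreSym.sq_one' p (mt (ZMod.intCast_zmod_eq_zero_iff_dvd _ _).mp hu), mul_one,
    mul_one] at hsq

namespace Zsqrtd

variable {d : ℤ}

theorem dvd_iff_norm_dvd_mul_star {ρ z : ℤ√d} (hρ : ρ.norm ≠ 0) :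
    ρ ∣ z ↔ (ρ.norm : ℤ√d) ∣ z * star ρ := by
  constructor
  · rintro ⟨w, rfl⟩
    exact ⟨w, by rw [norm_eq_mul_conj]; ring⟩
  · rintro ⟨w, hw⟩
    refine ⟨w, Zsqrtd.eq_of_smul_eq_smul_left hρ ?_⟩
    calc (ρ.norm : ℤ√d) * z = z * star ρ * ρ := by rw [norm_eq_mul_conj]; ring
      _ = ρ.norm * (ρ * w) := by rw [hw]; ring

theorem not_dvd_im_of_squarefree_norm {σ : ℤ√d} {r : ℤ} (hr : Prime r) (hrN : r ∣ σ.norm)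
    (hN : Squarefree σ.norm) : ¬ r ∣ σ.im := by
  rintro ⟨k, hk⟩
  have hre : r ∣ σ.re := hr.dvd_of_dvd_pow (n := 2) <| by
    obtain ⟨l, hl⟩ := hrN
    exact ⟨l + d * r * k ^ 2, by rw [norm_def, hk] at hl; linear_combination hl⟩
  obtain ⟨j, hj⟩ := hre
  exact hr.not_isUnit <| hN r ⟨j ^ 2 - d * k ^ 2, by rw [norm_def, hj, hk]; ring⟩

theorem not_dvd_re_of_squarefree_norm {σ : ℤ√d} {r : ℤ} (hr : Prime r) (hrd : ¬ r ∣ d)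
    (hrN : r ∣ σ.norm) (hN : Squarefree σ.norm) : ¬ r ∣ σ.re := by
  intro hre
  refine not_dvd_im_of_squarefree_norm hr hrN hN (hr.dvd_of_dvd_pow (n := 2) ?_)
  have : r ∣ d * σ.im ^ 2 := by
    rw [show d * σ.im ^ 2 = σ.re ^ 2 - σ.norm by rw [norm_def]; ring]
    exact dvd_sub (dvd_pow hre two_ne_zero) hrN
  exact (hr.dvd_or_dvd this).resolve_left hrd

theorem gcd_im_re_eq_one_of_squarefree_norm {σ : ℤ√d} (hN : Squarefree σ.norm) :
    Int.gcd σ.im σ.re = 1 := by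
  obtain ⟨k, hk⟩ := Int.gcd_dvd_left σ.im σ.re
  obtain ⟨j, hj⟩ := Int.gcd_dvd_right σ.im σ.re
  have hunit := hN (Int.gcd σ.im σ.re) ⟨j ^ 2 - d * k ^ 2, by
    rw [norm_def]
    linear_combination (σ.re + Int.gcd σ.im σ.re * j) * hj
      - d * (σ.im + Int.gcd σ.im σ.re * k) * hk⟩
  rcases Int.isUnit_iff.mp hunit with h | h <;> omega

theorem dvd_iff_dvd_re_mul_im_sub {q : ℕ} (hq : q.Prime) {ρ : ℤ√d} (hρ : ρ.norm = q)
    (z : ℤ√d) : ρ ∣ z ↔ (q : ℤ) ∣ z.re * ρ.im - z.im * ρ.re := by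
  have hq' : Prime (q : ℤ) := Nat.prime_iff_prime_int.mp hq
  have him : ¬ (q : ℤ) ∣ ρ.im :=
    not_dvd_im_of_squarefree_norm hq' (by rw [hρ]) (by rw [hρ]; exact hq'.squarefree)
  rw [dvd_iff_norm_dvd_mul_star (by rw [hρ]; exact_mod_cast hq.ne_zero), hρ,
    show ((q : ℤ) : ℤ√d) = (q : ℤ√d) by norm_cast, ← Int.cast_natCast, intCast_dvd]
  simp only [re_mul, im_mul, re_star, im_star]
  constructor
  · rintro ⟨-, k, hk⟩
    exact ⟨-k, by linear_combination -hk⟩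
  · rintro ⟨k, hk⟩
    refine ⟨(hq'.dvd_or_dvd ?_).resolve_left him, -k, by linear_combination -hk⟩
    refine ⟨z.im + ρ.re * k, ?_⟩
    rw [norm_def] at hρ
    linear_combination ρ.re * hk + z.im * hρ

section Residue

variable {q : ℕ} [hq : Fact q.Prime] {ρ : ℤ√d}

theorem intCast_im_ne_zero_of_norm_eq (hρ : ρ.norm = q) : (ρ.im : ZMod q) ≠ 0 := by
  have hq' : Prime (q : ℤ) := Nat.prime_iff_prime_int.mp hq.out
  rw [Ne, ZMod.intCast_zmod_eq_zero_iff_dvd]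
  exact not_dvd_im_of_squarefree_norm hq' (by rw [hρ]) (by rw [hρ]; exact hq'.squarefree)

/-- Reduction modulo `ρ`: since `ρ ≡ 0`, the image of `√d` must be `-ρ.re / ρ.im`. -/
noncomputable def residueMap (hρ : ρ.norm = q) : ℤ√d →+* ZMod q :=
  lift ⟨-(ρ.re / ρ.im : ZMod q), by
    have h := congrArg (Int.cast : ℤ → ZMod q) hρ
    push_cast [norm_def, ZMod.natCast_self] at h
    field_simp [intCast_im_ne_zero_of_norm_eq hρ]
    linear_combination h⟩

theorem residueMap_mul_im (hρ : ρ.norm = q) (z : ℤ√d) :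
    residueMap hρ z * ρ.im = ((z.re * ρ.im - z.im * ρ.re : ℤ) : ZMod q) := by
  simp only [residueMap, lift_apply_apply]
  field_simp [intCast_im_ne_zero_of_norm_eq hρ]
  push_cast
  ring

theorem residueMap_eq_zero_iff (hρ : ρ.norm = q) (z : ℤ√d) : residueMap hρ z = 0 ↔ ρ ∣ z := by
  rw [dvd_iff_dvd_re_mul_im_sub hq.out hρ, ← ZMod.intCast_zmod_eq_zero_iff_dvd,
    ← residueMap_mul_im, mul_eq_zero, or_iff_left (intCast_im_ne_zero_of_norm_eq hρ)]

theorem exists_dvd_sub_sq_iff_isSquare (hρ : ρ.norm = q) (w : ℤ√d) :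
    (∃ ξ : ℤ√d, ρ ∣ w - ξ ^ 2) ↔
      IsSquare (((w.re * ρ.im - w.im * ρ.re) * ρ.im : ℤ) : ZMod q) := by
  rw [Int.cast_mul, ← residueMap_mul_im hρ, mul_assoc, ← sq,
    isSquare_mul_sq_iff (intCast_im_ne_zero_of_norm_eq hρ)]
  simp only [← residueMap_eq_zero_iff hρ, map_sub, map_pow, sub_eq_zero]
  constructor
  · rintro ⟨ξ, hξ⟩
    exact ⟨residueMap hρ ξ, by rw [hξ, sq]⟩
  · rintro ⟨r, hr⟩
    obtain ⟨n, rfl⟩ := ZMod.intCast_surjective r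
    exact ⟨n, by rw [hr, map_intCast, sq]⟩

theorem legendreSym_re_mul_im_sub_mul_im {π : ℤ√d} (hρ : ρ.norm = q)
    (hre : ¬ (q : ℤ) ∣ (π * star ρ).re) (him : ¬ (q : ℤ) ∣ (π * star ρ).im) :
    legendreSym q ((π.re * ρ.im - π.im * ρ.re) * ρ.im) =
      legendreSym q ρ.re * legendreSym q (π * star ρ).re := by
  rw [← legendreSym.mul]
  refine legendreSym_eq_of_mul_sq_modEq
    (Int.modEq_iff_dvd.mpr ⟨(π * star ρ).re * (π * star ρ).im * π.im, ?_⟩) hre him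
  rw [norm_def] at hρ
  simp only [re_mul, im_mul, re_star, im_star]
  linear_combination
    ((π.re * ρ.re + d * π.im * -ρ.im) * (π.re * -ρ.im + π.im * ρ.re) * π.im) * hρ

end Residue

theorem two_dvd_sub_one_iff {x : ℤ√d} : (2 : ℤ√d) ∣ x - 1 ↔ Odd x.re ∧ Even x.im := by
  rw [show (2 : ℤ√d) = ((2 : ℤ) : ℤ√d) by norm_cast, intCast_dvd, re_sub, im_sub, re_one,
    im_one, sub_zero, ← even_iff_two_dvd, ← even_iff_two_dvd, Int.even_sub_one,
    Int.not_even_iff_odd]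

theorem two_dvd_mul_star_sub_one {x y : ℤ√d} (hx : (2 : ℤ√d) ∣ x - 1)
    (hy : (2 : ℤ√d) ∣ y - 1) : (2 : ℤ√d) ∣ x * star y - 1 := by
  obtain ⟨hxre, hxim⟩ := two_dvd_sub_one_iff.mp hx
  obtain ⟨hyre, hyim⟩ := two_dvd_sub_one_iff.mp hy
  rw [two_dvd_sub_one_iff, re_mul, im_mul, re_star, im_star]
  exact ⟨(hxre.mul hyre).add_even (hyim.neg.mul_left _),
    (hyim.neg.mul_left _).add (hxim.mul_right _)⟩

theorem isTotallyPositive_iff_toReal {x : ℤ√2} :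
    x.IsTotallyPositive ↔ 0 < toReal zero_le_two x ∧ 0 < toReal zero_le_two (star x) := by
  simp [IsTotallyPositive, sub_eq_add_neg]

theorem IsTotallyPositive.mul {x y : ℤ√2} (hx : x.IsTotallyPositive)
    (hy : y.IsTotallyPositive) : (x * y).IsTotallyPositive := by
  rw [isTotallyPositive_iff_toReal] at *
  rw [star_mul', map_mul, map_mul]
  exact ⟨mul_pos hx.1 hy.1, mul_pos hx.2 hy.2⟩

theorem IsTotallyPositive.star {x : ℤ√2} (hx : x.IsTotallyPositive) :
    (star x).IsTotallyPositive := by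
  rw [isTotallyPositive_iff_toReal, star_star] at *
  exact hx.symm

theorem IsTotallyPositive.re_pos {x : ℤ√2} (hx : x.IsTotallyPositive) : 0 < x.re := by
  obtain ⟨h₁, h₂⟩ := hx
  exact_mod_cast (by linarith : (0 : ℝ) < x.re)

theorem norm_emod_eight {x : ℤ√2} (hx : (2 : ℤ√2) ∣ x - 1) : x.norm % 8 = 1 := by
  obtain ⟨⟨a, ha⟩, ⟨b, hb⟩⟩ := two_dvd_sub_one_iff.mp hx
  obtain ⟨c, hc⟩ := Int.even_mul_succ_self a
  have : x.norm = 4 * (a * (a + 1)) + 1 - 8 * b ^ 2 := by rw [norm_def, ha, hb]; ring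
  omega

theorem re_mul_star_modEq {x y : ℤ√2} (hx : (2 : ℤ√2) ∣ x - 1) (hy : (2 : ℤ√2) ∣ y - 1) :
    (x * star y).re ≡ x.re * y.re [ZMOD 8] := by
  obtain ⟨-, b, hb⟩ := two_dvd_sub_one_iff.mp hx
  obtain ⟨-, c, hc⟩ := two_dvd_sub_one_iff.mp hy
  exact Int.modEq_iff_dvd.mpr ⟨b * c, by rw [re_mul, re_star, im_star, hb, hc]; ring⟩

theorem not_dvd_re_and_not_dvd_im_of_dvd_norm {σ : ℤ√2} (hσ : (2 : ℤ√2) ∣ σ - 1)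
    (hN : Squarefree σ.norm) {r : ℕ} (hr : r.Prime) (hrN : (r : ℤ) ∣ σ.norm) :
    ¬ (r : ℤ) ∣ σ.re ∧ ¬ (r : ℤ) ∣ σ.im := by
  have hr' : Prime (r : ℤ) := Nat.prime_iff_prime_int.mp hr
  refine ⟨not_dvd_re_of_squarefree_norm hr' (fun hr2 => ?_) hrN hN,
    not_dvd_im_of_squarefree_norm hr' hrN hN⟩
  obtain rfl : r = 2 := (Nat.le_of_dvd two_pos (by exact_mod_cast hr2)).antisymm hr.two_le
  obtain ⟨k, hk⟩ := hrN
  have := norm_emod_eight hσ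
  omega

open NumberTheorySymbols in
theorem jacobiSym_re_eq_χ₈' {σ : ℤ√2} {N : ℕ} (hre : 0 < σ.re) (hσ : (2 : ℤ√2) ∣ σ - 1)
    (hN : σ.norm = N) (hsf : Squarefree N) : J(σ.re | N) = ZMod.χ₈' σ.re := by
  have hN4 : N % 4 = 1 := by have := norm_emod_eight hσ; omega
  have hgcd : Int.gcd σ.im σ.re = 1 :=
    gcd_im_re_eq_one_of_squarefree_norm (by rwa [hN, Int.squarefree_natCast])
  obtain ⟨A, hA⟩ := Int.eq_ofNat_of_zero_le hre.le
  have hAodd : Odd A := by rw [← Int.odd_coe_nat, ← hA]; exact (two_dvd_sub_one_iff.mp hσ).1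
  have hmod : (N : ℤ) ≡ -2 * σ.im ^ 2 [ZMOD A] :=
    Int.modEq_iff_dvd.mpr ⟨-A, by rw [← hN, norm_def, hA]; ring⟩
  rw [hA] at hgcd ⊢
  rw [← jacobiSym.quadratic_reciprocity_one_mod_four hN4 hAodd, jacobiSym.mod_left' hmod,
    jacobiSym.mul_left, jacobiSym.at_neg_two hAodd, jacobiSym.sq_one' hgcd, mul_one,
    Int.cast_natCast]

theorem legendreSym_re_eq_χ₈' {p : ℕ} [hp : Fact p.Prime] {σ : ℤ√2}
    (hpos : σ.IsTotallyPositive) (hσ : (2 : ℤ√2) ∣ σ - 1) (hN : σ.norm = p) :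
    legendreSym p σ.re = ZMod.χ₈' σ.re := by
  rw [jacobiSym.legendreSym.to_jacobiSym]
  exact jacobiSym_re_eq_χ₈' hpos.re_pos hσ hN hp.out.squarefree

theorem legendreSym_reciprocity {p q : ℕ} [hp : Fact p.Prime] [hq : Fact q.Prime] (hpq : p ≠ q)
    {π ρ : ℤ√2} (hπpos : π.IsTotallyPositive) (hρpos : ρ.IsTotallyPositive)
    (hπ1 : (2 : ℤ√2) ∣ π - 1) (hρ1 : (2 : ℤ√2) ∣ ρ - 1) (hπN : π.norm = p) (hρN : ρ.norm = q) :
    legendreSym q ((π.re * ρ.im - π.im * ρ.re) * ρ.im) =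
      legendreSym p ((ρ.re * π.im - ρ.im * π.re) * π.im) := by
  set σ := π * star ρ with hσ
  have hσ1 : (2 : ℤ√2) ∣ σ - 1 := two_dvd_mul_star_sub_one hπ1 hρ1
  have hσN : σ.norm = (p * q : ℕ) := by rw [norm_mul, norm_conj, hπN, hρN]; push_cast; rfl
  have hsf : Squarefree (p * q) := Nat.squarefree_mul_iff.mpr
    ⟨(Nat.coprime_primes hp.out hq.out).mpr hpq, hp.out.squarefree, hq.out.squarefree⟩
  have hσsf : Squarefree σ.norm := by rwa [hσN, Int.squarefree_natCast]
  obtain ⟨hpre, hpim⟩ := not_dvd_re_and_not_dvd_im_of_dvd_norm hσ1 hσsf hp.out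
    (by rw [hσN]; exact_mod_cast dvd_mul_right p q)
  obtain ⟨hqre, hqim⟩ := not_dvd_re_and_not_dvd_im_of_dvd_norm hσ1 hσsf hq.out
    (by rw [hσN]; exact_mod_cast dvd_mul_left q p)
  have hρ_star_π : ρ * star π = star σ := by rw [hσ, star_mul', star_star, mul_comm]
  have hsymb_q : legendreSym q ((π.re * ρ.im - π.im * ρ.re) * ρ.im) =
      legendreSym q ρ.re * legendreSym q σ.re :=
    legendreSym_re_mul_im_sub_mul_im hρN hqre hqim
  have hsymb_p : legendreSym p ((ρ.re * π.im - ρ.im * π.re) * π.im) =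
      legendreSym p π.re * legendreSym p σ.re := by
    rw [legendreSym_re_mul_im_sub_mul_im hπN, hρ_star_π, re_star] <;>
      simpa only [hρ_star_π, re_star, im_star, dvd_neg]
  have hχπ := legendreSym_re_eq_χ₈' hπpos hπ1 hπN
  have hχρ := legendreSym_re_eq_χ₈' hρpos hρ1 hρN
  have hsymb_σ : legendreSym p σ.re * legendreSym q σ.re = ZMod.χ₈' π.re * ZMod.χ₈' ρ.re := by
    rw [jacobiSym.legendreSym.to_jacobiSym, jacobiSym.legendreSym.to_jacobiSym,
      ← jacobiSym.mul_right, jacobiSym_re_eq_χ₈' (hπpos.mul hρpos.star).re_pos hσ1 hσN hsf,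
      ← map_mul, ← Int.cast_mul,
      (ZMod.intCast_eq_intCast_iff _ _ 8).mpr (re_mul_star_modEq hπ1 hρ1)]
  have hsymb_σ_sq : legendreSym p σ.re ^ 2 = 1 :=
    legendreSym.sq_one p (mt (ZMod.intCast_zmod_eq_zero_iff_dvd _ _).mp hpre)
  have hχρ_sq : ZMod.χ₈' ρ.re ^ 2 = 1 := by
    have hqρ : ¬ (q : ℤ) ∣ ρ.re := (not_dvd_re_and_not_dvd_im_of_dvd_norm hρ1
      (by rw [hρN, Int.squarefree_natCast]; exact hq.out.squarefree) hq.out (by rw [hρN])).1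
    rw [← hχρ]
    exact legendreSym.sq_one q (mt (ZMod.intCast_zmod_eq_zero_iff_dvd _ _).mp hqρ)
  rw [hsymb_q, hsymb_p, hχπ, hχρ]
  -- all four symbols are `±1`, and `(s/p)(s/q) = χ₈'(a)χ₈'(c)`
  linear_combination (-(ZMod.χ₈' ρ.re * legendreSym q σ.re)) * hsymb_σ_sq
    + ZMod.χ₈' ρ.re * legendreSym p σ.re * hsymb_σ + ZMod.χ₈' π.re * legendreSym p σ.re * hχρ_sq

end Zsqrtd

theorem quadratic_reciprocity_zsqrtd_two_general
    (π₂ ρ₂ : ℤ√2)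
    (hπpos : π₂.IsTotallyPositive) (hρpos : ρ₂.IsTotallyPositive)
    (hπ1 : (2 : ℤ√2) ∣ π₂ - 1) (hρ1 : (2 : ℤ√2) ∣ ρ₂ - 1)
    (p q : ℕ) (hp : p.Prime) (hq : q.Prime) (hpq : p ≠ q)
    (hπN : π₂.norm = (p : ℤ)) (hρN : ρ₂.norm = (q : ℤ)) :
    (∃ ξ : ℤ√2, ρ₂ ∣ π₂ - ξ ^ 2) ↔ (∃ ξ : ℤ√2, π₂ ∣ ρ₂ - ξ ^ 2) := by
  have := Fact.mk hp
  have := Fact.mk hq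
  rw [Zsqrtd.exists_dvd_sub_sq_iff_isSquare hρN, Zsqrtd.exists_dvd_sub_sq_iff_isSquare hπN,
    ← not_iff_not, ← legendreSym.eq_neg_one_iff, ← legendreSym.eq_neg_one_iff,
    Zsqrtd.legendreSym_reciprocity hpq hπpos hρpos hπ1 hρ1 hπN hρN]

/-- **Quadratic reciprocity in `ℤ[√2]`.**  If `π₂, ρ₂ ∈ ℤ[√2]` are totally positive,
`≡ 1 (mod 2)`, and their norms are distinct odd primes, then `π₂` is a square modulo
`ρ₂ ℤ[√2]` iff `ρ₂` is a square modulo `π₂ ℤ[√2]`. -/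
theorem quadratic_reciprocity_zsqrtd_two
    (π₂ ρ₂ : ℤ√2)
    (hπpos : π₂.IsTotallyPositive) (hρpos : ρ₂.IsTotallyPositive)
    (hπ1 : (2 : ℤ√2) ∣ π₂ - 1) (hρ1 : (2 : ℤ√2) ∣ ρ₂ - 1)
    (p q : ℕ) (hp : p.Prime) (hq : q.Prime) (hpodd : Odd p) (hqodd : Odd q) (hpq : p ≠ q)
    (hπN : π₂.norm = (p : ℤ)) (hρN : ρ₂.norm = (q : ℤ)) :
    (∃ ξ : ℤ√2, ρ₂ ∣ π₂ - ξ ^ 2) ↔ (∃ ξ : ℤ√2, π₂ ∣ ρ₂ - ξ ^ 2) :=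
  quadratic_reciprocity_zsqrtd_two_general π₂ ρ₂ hπpos hρpos hπ1 hρ1 p q hp hq hpq hπN hρN
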